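/- Every group of order 24 with trivial center is isomorphic to the symmetric group S₄. -/

import Mathlib

open Subgroup MulAction

private def permCongrMulEquivAux {α β : Type*} (e : α ≃ β) :
    Equiv.Perm α ≃* Equiv.Perm β :=
  { Equiv.permCongr e with
    map_mul' := fun p q => by
      ext x
      simp [Equiv.permCongr_apply] }

private theorem normal_of_index_two_aux {G : Type*} [Group G] (H : Subgroup G)
    (h : H.index = 2) : H.Normal := by
  constructor
  intro a ha g
  rw [Subgroup.mul_mem_iff_of_index_two h, Subgroup.mul_mem_iff_of_index_two h]
  simp [ha, Subgroup.inv_mem_iff]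

private theorem meet_center_aux {H : Type*} [Group H] [Finite H] (hH : Nat.card H = 8)
    (K : Subgroup H) [K.Normal] (hK : Nat.card K = 4) :
    ∃ z : H, z ∈ K ∧ z ≠ 1 ∧ ∀ h : H, h * z * h⁻¹ = z := by
  haveI : Fact (Nat.Prime 2) := ⟨by norm_num⟩
  have hp : IsPGroup 2 (ConjAct H) :=
    IsPGroup.of_card (n := 3) (by
      rw [show Nat.card (ConjAct H) = Nat.card H from rfl, hH]; norm_num)
  have hmod := hp.card_modEq_card_fixedPoints (↥K)
  rw [hK] at hmod
  have h1 : (1 : ↥K) ∈ fixedPoints (ConjAct H) ↥K := fun g => smul_one g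
  have hpos : 0 < Nat.card (fixedPoints (ConjAct H) ↥K) :=
    Nat.card_pos_iff.mpr ⟨⟨⟨1, h1⟩⟩, inferInstance⟩
  have h2 : 2 ≤ Nat.card (fixedPoints (ConjAct H) ↥K) := by
    have := hmod
    unfold Nat.ModEq at this
    omega
  have : Nontrivial (fixedPoints (ConjAct H) ↥K) := by
    rw [← Finite.one_lt_card_iff_nontrivial]
    omega
  obtain ⟨⟨z, hzf⟩, hzne⟩ := exists_ne (⟨⟨1, K.one_mem⟩, h1⟩ : fixedPoints (ConjAct H) ↥K)
  refine ⟨(z : H), z.2, ?_, ?_⟩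
  · intro hz1
    apply hzne
    ext
    exact hz1
  · intro h
    have := hzf (ConjAct.toConjAct h)
    have hval : ((ConjAct.toConjAct h • z : ↥K) : H) = (z : H) := by
      rw [this]
    rw [ConjAct.Subgroup.val_conj_smul, ConjAct.toConjAct_smul] at hval
    exact hval

private theorem sylow3_card_aux (G : Type*) [Group G] [Finite G] (hcard : Nat.card G = 24)
    [Fact (Nat.Prime 3)] (Q : Sylow 3 G) : Nat.card Q = 3 := by
  rw [Q.card_eq_multiplicity, hcard]
  rw [show (24:ℕ) = 2^3*3 by norm_num, Nat.factorization_mul (by norm_num) (by norm_num),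
    Nat.factorization_pow]
  simp [Nat.Prime.factorization (by norm_num : Nat.Prime 2),
    Nat.Prime.factorization (by norm_num : Nat.Prime 3), Finsupp.single_apply]

private theorem case_four_aux (G : Type*) [Group G] [Finite G] (hcard : Nat.card G = 24)
    (hcenter : Subgroup.center G = ⊥) (h4 : Nat.card (Sylow 3 G) = 4) :
    Nonempty (G ≃* Equiv.Perm (Fin 4)) := by
  haveI : Fact (Nat.Prime 3) := ⟨by norm_num⟩
  set φ := MulAction.toPermHom G (Sylow 3 G) with hφ
  have hkerle : ∀ Q : Sylow 3 G, φ.ker ≤ Subgroup.normalizer (Q : Set G) := by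
    intro Q g hg
    rw [← Sylow.stabilizer_eq_normalizer]
    have h1 : φ g = 1 := hg
    rw [MulAction.mem_stabilizer_iff]
    have := Equiv.ext_iff.mp h1 Q
    simpa [hφ] using this
  obtain ⟨Q0⟩ : Nonempty (Sylow 3 G) := inferInstance
  have hNcard : Nat.card (Subgroup.normalizer (Q0 : Set G)) = 6 := by
    have hidx : Nat.card (Sylow 3 G) = (Subgroup.normalizer (Q0 : Set G)).index :=
      Q0.card_eq_index_normalizer
    have hmi := Subgroup.card_mul_index (Subgroup.normalizer (Q0 : Set G))
    rw [hcard] at hmi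
    rw [← hidx] at hmi
    rw [h4] at hmi
    omega
  have hKdvd : Nat.card φ.ker ∣ 6 := hNcard ▸ Subgroup.card_dvd_of_le (hkerle Q0)
  have h3K : ¬ 3 ∣ Nat.card φ.ker := by
    intro h3
    obtain ⟨g, hgord⟩ := exists_prime_orderOf_dvd_card' (G := φ.ker) 3 h3
    set x : G := (g : G) with hx
    have hx3 : orderOf x = 3 := by rw [hx, Subgroup.orderOf_coe, hgord]
    have hpg : IsPGroup 3 (Subgroup.zpowers x) :=
      IsPGroup.of_card (n := 1) (by rw [Nat.card_zpowers, hx3, pow_one])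
    have hle : ∀ Q : Sylow 3 G, Subgroup.zpowers x ≤ (Q : Subgroup G) := by
      intro Q
      have h1 : Subgroup.zpowers x ≤ Subgroup.normalizer (Q : Set G) :=
        Subgroup.zpowers_le.mpr (hkerle Q g.2)
      have h2 := IsPGroup.inf_normalizer_sylow hpg Q
      rw [inf_eq_left.mpr h1] at h2
      exact h2.le.trans inf_le_right
    have heq : ∀ Q : Sylow 3 G, (Q : Subgroup G) = Subgroup.zpowers x := by
      intro Q
      refine (Subgroup.eq_of_le_of_card_ge (hle Q) ?_).symm
      rw [sylow3_card_aux G hcard Q, Nat.card_zpowers, hx3]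
    haveI : Subsingleton (Sylow 3 G) :=
      ⟨fun Q R => Sylow.ext (by rw [heq Q, heq R])⟩
    have h1 : Nat.card (Sylow 3 G) = 1 :=
      Nat.card_eq_one_iff_unique.mpr ⟨inferInstance, inferInstance⟩
    omega
  have hpos : 0 < Nat.card φ.ker := Nat.card_pos
  have h6 : Nat.card φ.ker ≤ 6 := Nat.le_of_dvd (by norm_num) hKdvd
  have hK12 : Nat.card φ.ker = 1 ∨ Nat.card φ.ker = 2 := by
    set nK := Nat.card φ.ker
    clear_value nK
    interval_cases nK <;> revert hKdvd h3K <;> decide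
  have hKbot : φ.ker = ⊥ := by
    rcases hK12 with h | h
    · exact Subgroup.card_eq_one.mp h
    · exfalso
      obtain ⟨k, hk1, huniq⟩ := (Nat.card_eq_two_iff' (1 : φ.ker)).mp h
      have hkcenter : (k : G) ∈ Subgroup.center G := by
        rw [Subgroup.mem_center_iff]
        intro g
        have hconj : g * (k : G) * g⁻¹ ∈ φ.ker :=
          (MonoidHom.normal_ker φ).conj_mem _ k.2 g
        have hc1 : (⟨g * (k : G) * g⁻¹, hconj⟩ : φ.ker) ≠ 1 := by
          intro hh
          apply hk1
          have : g * (k : G) * g⁻¹ = 1 := Subtype.ext_iff.mp hh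
          have : (k : G) = 1 := by
            have h2 := congrArg (fun y => g⁻¹ * y * g) this
            simpa [mul_assoc] using h2
          exact Subtype.ext this
        have := huniq _ hc1
        have hval : g * (k : G) * g⁻¹ = (k : G) := Subtype.ext_iff.mp this
        calc g * (k : G) = (g * (k : G) * g⁻¹) * g := by group
        _ = (k : G) * g := by rw [hval]
      rw [hcenter] at hkcenter
      exact hk1 (Subtype.ext hkcenter)
  have hinjφ : Function.Injective φ := (MonoidHom.ker_eq_bot_iff φ).mp hKbot
  haveI : Fintype G := Fintype.ofFinite G
  haveI : Fintype (Sylow 3 G) := Fintype.ofFinite _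
  have e : Sylow 3 G ≃ Fin 4 :=
    Fintype.equivFinOfCardEq (by rw [← Nat.card_eq_fintype_card, h4])
  set ψ := (permCongrMulEquivAux e).toMonoidHom.comp φ with hψ
  have hinjψ : Function.Injective ψ :=
    (permCongrMulEquivAux e).injective.comp hinjφ
  have hbij : Function.Bijective ψ := by
    rw [Fintype.bijective_iff_injective_and_card]
    refine ⟨hinjψ, ?_⟩
    rw [← Nat.card_eq_fintype_card, hcard]
    norm_num [Fintype.card_perm, Nat.factorial]
  exact ⟨MulEquiv.ofBijective ψ hbij⟩

private theorem sylow2_card_aux (G : Type*) [Group G] [Finite G] (hcard : Nat.card G = 24)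
    [Fact (Nat.Prime 2)] (Q : Sylow 2 G) : Nat.card Q = 8 := by
  rw [Q.card_eq_multiplicity, hcard]
  rw [show (24:ℕ) = 2^3*3 by norm_num, Nat.factorization_mul (by norm_num) (by norm_num),
    Nat.factorization_pow]
  simp [Nat.Prime.factorization (by norm_num : Nat.Prime 2),
    Nat.Prime.factorization (by norm_num : Nat.Prime 3), Finsupp.single_apply]

private theorem case_one_aux (G : Type*) [Group G] [Finite G] (hcard : Nat.card G = 24)
    (hcenter : Subgroup.center G = ⊥) (h1 : Nat.card (Sylow 3 G) = 1) : False := by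
  haveI : Fact (Nat.Prime 3) := ⟨by norm_num⟩
  haveI : Fact (Nat.Prime 2) := ⟨by norm_num⟩
  obtain ⟨P⟩ : Nonempty (Sylow 3 G) := inferInstance
  haveI hss : Subsingleton (Sylow 3 G) := (Nat.card_eq_one_iff_unique.mp h1).1
  haveI hPnormal : (P : Subgroup G).Normal := by
    rw [← Subgroup.normalizer_eq_top_iff, eq_top_iff]
    intro g _
    change g ∈ Subgroup.normalizer (P : Set G)
    rw [← Sylow.smul_eq_iff_mem_normalizer]
    exact Subsingleton.elim _ _
  have hP3 : Nat.card P = 3 := sylow3_card_aux G hcard P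
  obtain ⟨ξ, hξ⟩ := exists_prime_orderOf_dvd_card' (G := ↥(P : Subgroup G)) 3 (by rw [hP3])
  set x : G := ↑ξ with hxdef
  have hx3 : orderOf x = 3 := by rw [hxdef, Subgroup.orderOf_coe, hξ]
  have hxP : x ∈ (P : Subgroup G) := ξ.2
  have hx1 : x ≠ 1 := by
    intro h
    rw [h, orderOf_one] at hx3
    omega
  have hzP : Subgroup.zpowers x = (P : Subgroup G) :=
    Subgroup.eq_of_le_of_card_ge (Subgroup.zpowers_le.mpr hxP)
      (by rw [hP3, Nat.card_zpowers, hx3])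
  have hxpow3 : x ^ (3 : ℕ) = 1 := by rw [← hx3]; exact pow_orderOf_eq_one x
  set C : Subgroup G := Subgroup.centralizer {x} with hCdef
  -- the orbit of x under conjugation is contained in {x, x⁻¹}
  have horb : MulAction.orbit (ConjAct G) x ⊆ {x, x⁻¹} := by
    rintro y ⟨g, rfl⟩
    set g' : G := ConjAct.ofConjAct g with hg'
    have hsmul : g • x = g' * x * g'⁻¹ := ConjAct.smul_def g x
    have hmem : g' * x * g'⁻¹ ∈ (P : Subgroup G) := hPnormal.conj_mem x hxP g'
    rw [← hzP] at hmem
    obtain ⟨n, hn⟩ := hmem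
    change x ^ n = g' * x * g'⁻¹ at hn
    have hne1 : g' * x * g'⁻¹ ≠ 1 := by
      intro hcon
      apply hx1
      have h2 := congrArg (fun y => g'⁻¹ * y * g') hcon
      simpa [mul_assoc] using h2
    have hmod : x ^ n = x ^ (n % 3) := zpow_eq_zpow_emod' n hxpow3
    have hrange : n % 3 = 0 ∨ n % 3 = 1 ∨ n % 3 = 2 := by omega
    show g • x ∈ ({x, x⁻¹} : Set G)
    rw [hsmul]
    rcases hrange with h | h | h
    · exfalso
      apply hne1
      rw [← hn, hmod, h, zpow_zero]
    · left
      rw [← hn, hmod, h, zpow_one]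
    · right
      rw [← hn, hmod, h]
      show x ^ (2:ℤ) = x⁻¹
      have : x ^ (2:ℤ) * x = 1 := by
        rw [show x ^ (2:ℤ) * x = x ^ (3:ℕ) by
          rw [zpow_two]; rw [pow_succ, pow_two]]
        exact hxpow3
      exact eq_inv_of_mul_eq_one_left this
  have hCidx2 : C.index ≤ 2 := by
    rw [hCdef, Subgroup.centralizer_eq_comap_stabilizer]
    erw [Subgroup.index_comap_of_surjective _ ConjAct.toConjAct.surjective]
    rw [MulAction.index_stabilizer]
    calc (MulAction.orbit (ConjAct G) x).ncard ≤ ({x, x⁻¹} : Set G).ncard :=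
          Set.ncard_le_ncard horb (Set.toFinite _)
    _ ≤ 2 := by
          apply le_trans (Set.ncard_insert_le _ _)
          simp
  -- C ≠ ⊤ since the center is trivial
  have hCindex_pos : C.index ≠ 0 := by
    have := Subgroup.card_mul_index C
    rw [hcard] at this
    intro h
    rw [h] at this
    omega
  have hCne : C.index ≠ 1 := by
    intro h
    have hCtop : C = ⊤ := Subgroup.index_eq_one.mp h
    have hxc : x ∈ Subgroup.center G := by
      rw [Subgroup.mem_center_iff]
      intro g
      have hg : g ∈ C := hCtop ▸ Subgroup.mem_top g
      have := Subgroup.mem_centralizer_iff.mp hg x (Set.mem_singleton x)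
      exact this.symm
    rw [hcenter, Subgroup.mem_bot] at hxc
    exact hx1 hxc
  have hCidx : C.index = 2 := by omega
  have hC12 : Nat.card C = 12 := by
    have := Subgroup.card_mul_index C
    rw [hcard, hCidx] at this
    omega
  -- Sylow 2-subgroup
  obtain ⟨Q⟩ : Nonempty (Sylow 2 G) := inferInstance
  have hQ8 : Nat.card Q = 8 := sylow2_card_aux G hcard Q
  have hQidx : (Q : Subgroup G).index = 3 := by
    have := Subgroup.card_mul_index (Q : Subgroup G)
    rw [hcard, hQ8] at this
    omega
  set D : Subgroup G := C ⊓ (Q : Subgroup G) with hDdef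
  have hDQ : D ≤ (Q : Subgroup G) := inf_le_right
  have hD8 : Nat.card D ∣ 8 := hQ8 ▸ Subgroup.card_dvd_of_le inf_le_right
  have hD12 : Nat.card D ∣ 12 := hC12 ▸ Subgroup.card_dvd_of_le inf_le_left
  have hD4 : Nat.card D ∣ 4 := by
    have := Nat.dvd_gcd hD8 hD12
    norm_num at this
    exact this
  have hDidx : D.index ≤ 6 := by
    calc D.index ≤ C.index * (Q : Subgroup G).index := Subgroup.index_inf_le
    _ = 6 := by rw [hCidx, hQidx]
  have hDmul : Nat.card D * D.index = 24 := by rw [Subgroup.card_mul_index, hcard]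
  have hDcard : Nat.card D = 4 := by
    have hpos : 0 < Nat.card D := Nat.card_pos
    have hle4 : Nat.card D ≤ 4 := Nat.le_of_dvd (by norm_num) hD4
    set nD := Nat.card ↥D with hnD
    interval_cases nD <;> omega
  -- pass to the subgroup of Q
  set K : Subgroup (Q : Subgroup G) := D.subgroupOf (Q : Subgroup G) with hKdef
  have hKcard : Nat.card K = 4 := by
    rw [← hDcard]
    exact Nat.card_congr (Subgroup.subgroupOfEquivOfLe hDQ).toEquiv
  have hKidx : K.index = 2 := by
    have hmul := Subgroup.card_mul_index K
    rw [hKcard, hQ8] at hmul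
    omega
  haveI : K.Normal := normal_of_index_two_aux K hKidx
  obtain ⟨z, hzK, hz1, hzc⟩ := meet_center_aux hQ8 K hKcard
  set z0 : G := ((z : (Q : Subgroup G)) : G) with hz0def
  have hz0D : z0 ∈ D := (Subgroup.mem_subgroupOf).mp hzK
  have hz0C : z0 ∈ C := hz0D.1
  have hz0ne : z0 ≠ 1 := by
    intro h
    exact hz1 (Subtype.ext h)
  have hcommQ : ∀ q ∈ (Q : Subgroup G), q * z0 = z0 * q := by
    intro q hq
    have := hzc ⟨q, hq⟩
    have hval : q * z0 * q⁻¹ = z0 := Subtype.ext_iff.mp this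
    calc q * z0 = (q * z0 * q⁻¹) * q := by group
    _ = z0 * q := by rw [hval]
  have htop : Subgroup.zpowers x ⊔ (Q : Subgroup G) = ⊤ := by
    apply Subgroup.eq_top_of_card_eq
    rw [hcard]
    have h3d : 3 ∣ Nat.card (Subgroup.zpowers x ⊔ (Q : Subgroup G) : Subgroup G) := by
      have := Subgroup.card_dvd_of_le (le_sup_left :
        Subgroup.zpowers x ≤ Subgroup.zpowers x ⊔ (Q : Subgroup G))
      rwa [Nat.card_zpowers, hx3] at this
    have h8d : 8 ∣ Nat.card (Subgroup.zpowers x ⊔ (Q : Subgroup G) : Subgroup G) := by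
      have := Subgroup.card_dvd_of_le (le_sup_right :
        (Q : Subgroup G) ≤ Subgroup.zpowers x ⊔ (Q : Subgroup G))
      rwa [hQ8] at this
    have h24d : (24 : ℕ) ∣ Nat.card (Subgroup.zpowers x ⊔ (Q : Subgroup G) : Subgroup G) :=
      Nat.Coprime.mul_dvd_of_dvd_of_dvd (by norm_num) h3d h8d
    have hle : Nat.card (Subgroup.zpowers x ⊔ (Q : Subgroup G) : Subgroup G) ∣ 24 :=
      hcard ▸ Subgroup.card_subgroup_dvd_card _
    exact Nat.dvd_antisymm hle h24d
  have hz0center : z0 ∈ Subgroup.center G := by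
    rw [Subgroup.mem_center_iff]
    intro g
    have hle : Subgroup.zpowers x ⊔ (Q : Subgroup G) ≤ Subgroup.centralizer {z0} := by
      apply sup_le
      · rw [Subgroup.zpowers_le]
        rw [Subgroup.mem_centralizer_iff]
        intro y hy
        rw [Set.mem_singleton_iff] at hy
        subst hy
        exact (Subgroup.mem_centralizer_iff.mp hz0C x (Set.mem_singleton x)).symm
      · intro q hq
        rw [Subgroup.mem_centralizer_iff]
        intro y hy
        rw [Set.mem_singleton_iff] at hy
        subst hy
        exact (hcommQ q hq).symm
    have hg : g ∈ Subgroup.centralizer {z0} := hle (htop ▸ Subgroup.mem_top g)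
    exact (Subgroup.mem_centralizer_iff.mp hg z0 (Set.mem_singleton z0)).symm
  rw [hcenter, Subgroup.mem_bot] at hz0center
  exact hz0ne hz0center


/-- Every group of order 24 with trivial center is isomorphic to the symmetric
group `S₄`. -/
theorem order_twentyfour_trivial_center_iso_S4
    (G : Type*) [Group G] (hcard : Nat.card G = 24)
    (hcenter : Subgroup.center G = ⊥) :
    Nonempty (G ≃* Equiv.Perm (Fin 4)) := by
  haveI : Finite G := Nat.finite_of_card_ne_zero (by rw [hcard]; norm_num)
  haveI : Fact (Nat.Prime 3) := ⟨by norm_num⟩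
  obtain ⟨P⟩ : Nonempty (Sylow 3 G) := inferInstance
  have hP3 : Nat.card P = 3 := sylow3_card_aux G hcard P
  have hPidx : (P : Subgroup G).index = 8 := by
    have := Subgroup.card_mul_index (P : Subgroup G)
    rw [hcard, hP3] at this
    omega
  have hdvd : Nat.card (Sylow 3 G) ∣ 8 := hPidx ▸ P.card_dvd_index
  have hmodeq := card_sylow_modEq_one 3 G
  have hmod : Nat.card (Sylow 3 G) % 3 = 1 := by
    have := hmodeq
    unfold Nat.ModEq at this
    omega
  have hpos : 0 < Nat.card (Sylow 3 G) := Nat.card_pos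
  have hle : Nat.card (Sylow 3 G) ≤ 8 := Nat.le_of_dvd (by norm_num) hdvd
  have h14 : Nat.card (Sylow 3 G) = 1 ∨ Nat.card (Sylow 3 G) = 4 := by
    set n := Nat.card (Sylow 3 G) with hn
    clear_value n
    interval_cases n <;> revert hdvd hmod <;> decide
  rcases h14 with h | h
  · exact absurd (case_one_aux G hcard hcenter h) not_false
  · exact case_four_aux G hcard hcenter h
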